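/- Let η: [0,∞) → [0,1] be a fixed non-increasing C^∞ cutoff with η ≡ 1 on [0, 1/2] and η ≡ 0 on [2/3, ∞), and φ C² with φ → ∞, φ', φ'' → 0 at infinity. For 0 < t ≤ 1/2, define u_t: ℝⁿ → ℝ by u_t(x) = η(|x|) x₁x₂ |x|^{2t} φ(−ln |x|²) for 0 < |x| < 1, u_t(0) = 0, and u_t(x) = 0 for |x| ≥ 1. Then there is a constant B₂ depending only on η and φ (not on t) such that sup_{x ∈ ℝⁿ} |∂u_t/∂x_j(x)| ≤ B₂ for every j = 1,...,n. -/

import Mathlib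

open Real Filter Metric Set Classical

set_option maxHeartbeats 1000000


private lemma stmt8_habs {X Y x y : ℝ} (hX : |X| ≤ x) (hY : |Y| ≤ y) : |X*Y| ≤ x*y := by
  rw [abs_mul]; exact mul_le_mul hX hY (abs_nonneg _) ((abs_nonneg X).trans hX)

private lemma stmt8_bound_aux (r sl t e e' p p' a b Xj c0 c1 Mη M' C1 : ℝ)
    (hr0 : 0 < r) (hr1 : r ≤ 1)
    (ht : 0 < t) (ht2 : t ≤ 1/2)
    (he : |e| ≤ 1) (he' : |e'| ≤ Mη)
    (hp : |p| ≤ C1 + M' * sl) (hp' : |p'| ≤ M')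
    (ha : |a| ≤ r) (hb : |b| ≤ r) (hX : |Xj| ≤ r)
    (hc0 : |c0| ≤ 1) (hc1 : |c1| ≤ 1)
    (hsl : 0 ≤ sl) (hrs : r * sl ≤ 2)
    (hC1 : 0 ≤ C1) (hM' : 0 ≤ M') (hMη : 0 ≤ Mη) :
    |e*a*b*(r^2)^t*(p' * -(r^2)⁻¹ * (2*(1*Xj)))
     + p*(e*a*b*(t*(r^2)^(t-1)*(2*(1*Xj)))
          + (r^2)^t*((e*a*c1) + b*((e*c0) + a*(e'*(1/(2*r))*(2*(1*Xj))))))|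
    ≤ 2*M' + (C1+2*M')*(3+Mη) := by
  have hq0 : (0:ℝ) < r^2 := by positivity
  have hR0 : (0:ℝ) ≤ (r^2)^t := Real.rpow_nonneg (by positivity) t
  have hR1 : (r^2)^t ≤ 1 := Real.rpow_le_one (by positivity) (by nlinarith) ht.le
  have hRabs : |(r^2)^t| ≤ 1 := by rwa [abs_of_nonneg hR0]
  have hrpow : (r^2)^(t-1) * r^2 = (r^2)^t := by
    have h := (Real.rpow_add hq0 (t-1) 1).symm
    rw [Real.rpow_one] at h
    rw [h]; norm_num
  have h2X : |2*(1*Xj)| ≤ 2*(1*r) := stmt8_habs (by norm_num) (by simpa using hX)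
  have heab : |e*a*b| ≤ 1*r*r := stmt8_habs (stmt8_habs he ha) hb
  -- term T5
  have hT5 : |e*a*b*(r^2)^t*(p' * -(r^2)⁻¹ * (2*(1*Xj)))| ≤ 2*M' := by
    have hinner : |p' * -(r^2)⁻¹ * (2*(1*Xj))| ≤ M' * (r^2)⁻¹ * (2*(1*r)) := by
      refine stmt8_habs (stmt8_habs hp' ?_) h2X
      rw [abs_neg, abs_inv, abs_of_nonneg hq0.le]
    have := stmt8_habs (stmt8_habs heab hRabs) hinner
    refine le_trans this ?_
    have heq : 1*r*r*1*(M' * (r^2)⁻¹ * (2*(1*r))) = 2*M'*r := by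
      field_simp
    rw [heq]; nlinarith
  -- term T4
  have hT4 : |e*a*b*(t*(r^2)^(t-1)*(2*(1*Xj)))| ≤ r := by
    have htr : |t*(r^2)^(t-1)| ≤ t*(r^2)^(t-1) := by
      rw [abs_of_nonneg (by positivity)]
    have hinner : |t*(r^2)^(t-1)*(2*(1*Xj))| ≤ t*(r^2)^(t-1) * (2*(1*r)) :=
      stmt8_habs htr h2X
    refine le_trans (stmt8_habs heab hinner) ?_
    have heq : 1*r*r*(t*(r^2)^(t-1) * (2*(1*r))) = 2*t*((r^2)^(t-1)*r^2)*r := by ring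
    rw [heq, hrpow]
    have h1 : 2*t*(r^2)^t*r ≤ 2*t*r := by
      nlinarith [mul_le_mul_of_nonneg_left hR1 (by positivity : (0:ℝ) ≤ 2*t*r)]
    nlinarith [mul_le_mul_of_nonneg_right (by linarith : 2*t ≤ 1) hr0.le]
  -- inner cutoff terms
  have hD : |e*c0| ≤ 1 := by simpa using stmt8_habs he hc0
  have hE : |a*(e'*(1/(2*r))*(2*(1*Xj)))| ≤ Mη*r := by
    have h12r : |(1:ℝ)/(2*r)| ≤ 1/(2*r) := by
      rw [abs_of_nonneg (by positivity)]
    have hinner : |e'*(1/(2*r))*(2*(1*Xj))| ≤ Mη*(1/(2*r))*(2*(1*r)) :=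
      stmt8_habs (stmt8_habs he' h12r) h2X
    refine le_trans (stmt8_habs ha hinner) ?_
    have heq : r*(Mη*(1/(2*r))*(2*(1*r))) = Mη*r := by
      field_simp
    rw [heq]
  have hDE : |(e*c0) + a*(e'*(1/(2*r))*(2*(1*Xj)))| ≤ 1 + Mη*r :=
    (abs_add_le _ _).trans (add_le_add hD hE)
  have hbDE : |b*((e*c0) + a*(e'*(1/(2*r))*(2*(1*Xj))))| ≤ r*(1+Mη*r) :=
    stmt8_habs hb hDE
  have hCt : |e*a*c1| ≤ r := by simpa using stmt8_habs (stmt8_habs he ha) hc1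
  have hsum1 : |(e*a*c1) + b*((e*c0) + a*(e'*(1/(2*r))*(2*(1*Xj))))| ≤ r + r*(1+Mη*r) :=
    (abs_add_le _ _).trans (add_le_add hCt hbDE)
  have hRsum : |(r^2)^t*((e*a*c1) + b*((e*c0) + a*(e'*(1/(2*r))*(2*(1*Xj)))))|
      ≤ 1*(r + r*(1+Mη*r)) := stmt8_habs hRabs hsum1
  have hsump : |e*a*b*(t*(r^2)^(t-1)*(2*(1*Xj)))
      + (r^2)^t*((e*a*c1) + b*((e*c0) + a*(e'*(1/(2*r))*(2*(1*Xj)))))|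
      ≤ r + 1*(r + r*(1+Mη*r)) := (abs_add_le _ _).trans (add_le_add hT4 hRsum)
  have hpterm : |p*(e*a*b*(t*(r^2)^(t-1)*(2*(1*Xj)))
      + (r^2)^t*((e*a*c1) + b*((e*c0) + a*(e'*(1/(2*r))*(2*(1*Xj))))))|
      ≤ (C1 + M'*sl) * (r + 1*(r + r*(1+Mη*r))) := stmt8_habs hp hsump
  refine le_trans ((abs_add_le _ _).trans (add_le_add hT5 hpterm)) ?_
  have key : (C1 + M'*sl) * (r + 1*(r + r*(1+Mη*r))) ≤ (C1+2*M')*(3+Mη) := by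
    have h1 : sl*r ≤ 2 := by linarith [hrs, mul_comm r sl]
    have h2 : sl*r^2 ≤ 2*r := by nlinarith
    nlinarith [mul_nonneg hM' hMη, mul_nonneg hC1 hMη, mul_nonneg (mul_nonneg hM' hMη) hsl,
      mul_le_mul_of_nonneg_left h2 (mul_nonneg hM' hMη),
      mul_le_mul_of_nonneg_left h1 hM',
      mul_le_mul_of_nonneg_left hr1 hC1,
      mul_le_mul_of_nonneg_left (mul_le_one₀ hr1 hr0.le hr1) (mul_nonneg hC1 hMη)]
  linarith


/-- Uniform (in t) bound on the first partial derivatives of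
u_t(x) = η(|x|) x₁ x₂ |x|^{2t} φ(−ln|x|²). -/
theorem stmt8 (n : ℕ) (hn : 2 ≤ n) (φ η : ℝ → ℝ)
    (hφsmooth : ContDiffOn ℝ 2 φ (Set.Ioi 0))
    (hφ : Tendsto φ atTop atTop)
    (hφ' : Tendsto (deriv φ) atTop (nhds 0))
    (hφ'' : Tendsto (deriv (deriv φ)) atTop (nhds 0))
    (hηsmooth : ContDiff ℝ (⊤ : ℕ∞) η)
    (hηmono : AntitoneOn η (Set.Ici 0))
    (hηrange : ∀ s : ℝ, 0 ≤ s → η s ∈ Set.Icc (0:ℝ) 1)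
    (hη1 : ∀ s : ℝ, 0 ≤ s → s ≤ 1/2 → η s = 1)
    (hη0 : ∀ s : ℝ, 2/3 ≤ s → η s = 0)
    (u : ℝ → EuclideanSpace ℝ (Fin n) → ℝ)
    (hu : ∀ t : ℝ, ∀ x : EuclideanSpace ℝ (Fin n),
      u t x = if x = 0 ∨ 1 ≤ ‖x‖ then 0
        else η ‖x‖ * x ⟨0, by omega⟩ * x ⟨1, by omega⟩ * ‖x‖ ^ (2 * t)
              * φ (-Real.log (‖x‖ ^ (2:ℕ)))) :
    ∃ B₂ : ℝ, ∀ t : ℝ, 0 < t → t ≤ 1/2 → ∀ j : Fin n,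
      ∀ x : EuclideanSpace ℝ (Fin n),
        |fderiv ℝ (u t) x (EuclideanSpace.single j 1)| ≤ B₂ := by
  classical
  -- the cutoff derivative bound
  have hderη : Continuous (deriv η) :=
    ((contDiff_infty_iff_deriv.mp (hηsmooth.of_le (by simp))).2).continuous
  obtain ⟨Mη₀, hMη₀⟩ := (isCompact_Icc (a := (0:ℝ)) (b := 1)).exists_bound_of_continuousOn
    hderη.continuousOn
  set Mη : ℝ := max Mη₀ 0 with hMηdef
  have hMη : ∀ s : ℝ, 0 ≤ s → s ≤ 1 → |deriv η s| ≤ Mη := by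
    intro s h0 h1
    exact le_trans (by simpa using hMη₀ s ⟨h0, h1⟩) (le_max_left _ _)
  have hMηnn : 0 ≤ Mη := le_max_right _ _
  -- threshold
  set s₀ : ℝ := Real.log (16/9) with hs₀def
  have hs₀pos : 0 < s₀ := Real.log_pos (by norm_num)
  -- bound on deriv φ on [s₀, ∞)
  have hφ'cont : ContinuousOn (deriv φ) (Set.Ioi 0) :=
    hφsmooth.continuousOn_deriv_of_isOpen isOpen_Ioi (by norm_num)
  obtain ⟨S, hS⟩ : ∃ S : ℝ, ∀ s ≥ S, |deriv φ s| ≤ 1 := by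
    have := (Metric.tendsto_nhds.mp hφ') 1 one_pos
    rw [Filter.eventually_atTop] at this
    obtain ⟨S, hS⟩ := this
    exact ⟨S, fun s hs => by simpa [Real.dist_eq] using (hS s hs).le⟩
  obtain ⟨M₀, hM₀⟩ := (isCompact_Icc (a := s₀) (b := max S s₀)).exists_bound_of_continuousOn
    (hφ'cont.mono (fun y hy => lt_of_lt_of_le hs₀pos hy.1))
  set M' : ℝ := max (max M₀ 1) 0 with hM'def
  have hM'nn : 0 ≤ M' := le_max_right _ _
  have hM' : ∀ s : ℝ, s₀ ≤ s → |deriv φ s| ≤ M' := by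
    intro s hs
    rcases le_or_gt s (max S s₀) with h | h
    · exact le_trans (by simpa using hM₀ s ⟨hs, h⟩)
        (le_trans (le_max_left _ _) (le_max_left _ _))
    · exact le_trans (hS s (le_trans (le_max_left _ _) h.le))
        (le_trans (le_max_right _ _) (le_max_left _ _))
  -- sublinear bound on φ on [s₀, ∞)
  have hφdiffIoi : ∀ s ∈ Set.Ici s₀, HasDerivWithinAt φ (deriv φ s) (Set.Ici s₀) s := by
    intro s hs
    have : DifferentiableAt ℝ φ s :=
      (hφsmooth.differentiableOn (by norm_num)).differentiableAt
        (isOpen_Ioi.mem_nhds (lt_of_lt_of_le hs₀pos hs))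
    exact this.hasDerivAt.hasDerivWithinAt
  set C1 : ℝ := |φ s₀| with hC1def
  have hC1nn : 0 ≤ C1 := abs_nonneg _
  have hφbound : ∀ s : ℝ, s₀ ≤ s → |φ s| ≤ C1 + M' * s := by
    intro s hs
    have key := (convex_Ici s₀).norm_image_sub_le_of_norm_hasDerivWithin_le
      hφdiffIoi (fun y hy => by simpa using hM' y hy) (Set.self_mem_Ici) hs
    have : |φ s - φ s₀| ≤ M' * (s - s₀) := by
      simpa [Real.norm_eq_abs, abs_of_nonneg (sub_nonneg.mpr hs)] using key
    have h0 : 0 ≤ s := le_trans hs₀pos.le hs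
    calc |φ s| ≤ |φ s₀| + |φ s - φ s₀| := by
          have := abs_add_le (φ s₀) (φ s - φ s₀); simpa using this
      _ ≤ C1 + M' * (s - s₀) := by rw [hC1def]; linarith
      _ ≤ C1 + M' * s := by nlinarith [hM'nn, hs₀pos]
  refine ⟨2*M' + (C1 + 2*M') * (3 + Mη), ?_⟩
  have hB₂nn : (0:ℝ) ≤ 2*M' + (C1 + 2*M') * (3 + Mη) := by positivity
  intro t ht ht2 j x
  rcases eq_or_ne x 0 with hx0 | hx0
  · -- at the origin: the slice along any coordinate direction vanishes identically
    subst hx0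
    have hzero : ∀ c : ℝ, u t (c • EuclideanSpace.single j (1:ℝ)) = 0 := by
      intro c
      rw [hu]
      split_ifs with h
      · rfl
      · rcases eq_or_ne j (⟨0, by omega⟩ : Fin n) with hj | hj
        · have hne : (⟨1, by omega⟩ : Fin n) ≠ j := by
            rw [hj]; intro hcon; exact absurd (congrArg Fin.val hcon) (by simp)
          have : (c • EuclideanSpace.single j (1:ℝ)) (⟨1, by omega⟩ : Fin n) = 0 := by
            simp [EuclideanSpace.single_apply, hne]
          rw [this]; ring
        · have hne : (⟨0, by omega⟩ : Fin n) ≠ j := fun hcon => hj hcon.symm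
          have : (c • EuclideanSpace.single j (1:ℝ)) (⟨0, by omega⟩ : Fin n) = 0 := by
            simp [EuclideanSpace.single_apply, hne]
          rw [this]; ring
    by_cases hdiff : DifferentiableAt ℝ (u t) 0
    · rw [← hdiff.lineDeriv_eq_fderiv]
      unfold lineDeriv
      have : (fun c : ℝ => u t ((0:EuclideanSpace ℝ (Fin n)) + c • EuclideanSpace.single j 1))
          = fun _ => (0:ℝ) := by
        funext c; simpa using hzero c
      rw [this, deriv_const]
      simpa using hB₂nn
    · rw [fderiv_zero_of_not_differentiableAt hdiff]
      simpa using hB₂nn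
  rcases lt_or_ge ‖x‖ (3/4) with hr | hr
  · -- main region 0 < ‖x‖ < 3/4
    have hr0 : (0:ℝ) < ‖x‖ := norm_pos_iff.mpr hx0
    have hq0 : (0:ℝ) < ‖x‖^2 := by positivity
    have hq1 : ‖x‖^2 ≤ 1 := by nlinarith
    have hslog : s₀ < -Real.log (‖x‖^2) := by
      rw [hs₀def, ← Real.log_inv]
      apply Real.log_lt_log (by norm_num)
      rw [lt_inv_comm₀ (by positivity) (by positivity)]
      nlinarith
    have hslogpos : 0 < -Real.log (‖x‖^2) := lt_trans hs₀pos hslog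
    -- r * s ≤ 2
    have hrs : ‖x‖ * (-Real.log (‖x‖^2)) ≤ 2 := by
      have hlog2 : Real.log (‖x‖^2) = 2 * Real.log ‖x‖ := by
        rw [sq]; rw [Real.log_mul hr0.ne' hr0.ne']; ring
      have hinv : -Real.log ‖x‖ ≤ ‖x‖⁻¹ := by
        have := Real.log_le_sub_one_of_pos (x := ‖x‖⁻¹) (by positivity)
        rw [Real.log_inv] at this
        linarith [inv_pos.mpr hr0]
      have : ‖x‖ * (-Real.log ‖x‖) ≤ 1 := by
        calc ‖x‖ * (-Real.log ‖x‖) ≤ ‖x‖ * ‖x‖⁻¹ := by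
              rcases le_or_gt (-Real.log ‖x‖) 0 with h | h
              · nlinarith [inv_pos.mpr hr0]
              · exact mul_le_mul_of_nonneg_left hinv hr0.le
          _ = 1 := mul_inv_cancel₀ hr0.ne'
      rw [hlog2]; nlinarith
    -- derivative computation
    have hq : HasFDerivAt (fun y : EuclideanSpace ℝ (Fin n) => ‖y‖^2) (2 • (innerSL ℝ x)) x := by
      simpa using (hasFDerivAt_id x).norm_sq
    have hsq : Real.sqrt (‖x‖^2) = ‖x‖ := Real.sqrt_sq (norm_nonneg x)
    have hf1 : HasFDerivAt (fun y : EuclideanSpace ℝ (Fin n) => η (Real.sqrt (‖y‖^2)))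
        ((deriv η ‖x‖ * (1/(2*‖x‖))) • (2 • (innerSL ℝ x))) x := by
      have h1 : HasDerivAt η (deriv η ‖x‖) (Real.sqrt (‖x‖^2)) := by
        rw [hsq]; exact ((hηsmooth.differentiable (by simp)) ‖x‖).hasDerivAt
      have h2 : HasDerivAt Real.sqrt (1/(2*Real.sqrt (‖x‖^2))) (‖x‖^2) :=
        Real.hasDerivAt_sqrt (by positivity)
      have h3 := (h1.comp _ h2).comp_hasFDerivAt x hq
      rw [hsq] at h3; exact h3
    have hf2 : HasFDerivAt (fun y : EuclideanSpace ℝ (Fin n) => y (⟨0, by omega⟩ : Fin n))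
        (EuclideanSpace.proj (𝕜 := ℝ) (⟨0, by omega⟩ : Fin n)) x := by
      exact (EuclideanSpace.proj (𝕜 := ℝ) (⟨0, by omega⟩ : Fin n)).hasFDerivAt
    have hf3 : HasFDerivAt (fun y : EuclideanSpace ℝ (Fin n) => y (⟨1, by omega⟩ : Fin n))
        (EuclideanSpace.proj (𝕜 := ℝ) (⟨1, by omega⟩ : Fin n)) x := by
      exact (EuclideanSpace.proj (𝕜 := ℝ) (⟨1, by omega⟩ : Fin n)).hasFDerivAt
    have hf4 : HasFDerivAt (fun y : EuclideanSpace ℝ (Fin n) => (‖y‖^2) ^ t)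
        ((t * (‖x‖^2) ^ (t-1)) • (2 • (innerSL ℝ x))) x :=
      (Real.hasDerivAt_rpow_const (p := t) (Or.inl hq0.ne')).comp_hasFDerivAt
        (f := fun y : EuclideanSpace ℝ (Fin n) => ‖y‖^2) x hq
    have hf5 : HasFDerivAt (fun y : EuclideanSpace ℝ (Fin n) => φ (-Real.log (‖y‖^2)))
        ((deriv φ (-Real.log (‖x‖^2)) * (-(‖x‖^2)⁻¹)) • (2 • (innerSL ℝ x))) x := by
      have hlog : HasDerivAt (fun a : ℝ => -Real.log a) (-(‖x‖^2)⁻¹) (‖x‖^2) :=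
        (Real.hasDerivAt_log hq0.ne').neg
      have hφd : HasDerivAt φ (deriv φ (-Real.log (‖x‖^2))) (-Real.log (‖x‖^2)) := by
        have : DifferentiableAt ℝ φ (-Real.log (‖x‖^2)) :=
          (hφsmooth.differentiableOn (by norm_num)).differentiableAt
            (isOpen_Ioi.mem_nhds hslogpos)
        exact this.hasDerivAt
      have hc : HasDerivAt (fun a : ℝ => φ (-Real.log a))
          (deriv φ (-Real.log (‖x‖^2)) * (-(‖x‖^2)⁻¹)) (‖x‖^2) := hφd.comp (‖x‖^2) hlog
      exact hc.comp_hasFDerivAt (f := fun y : EuclideanSpace ℝ (Fin n) => ‖y‖^2) x hq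
    have hV := (((hf1.mul hf2).mul hf3).mul hf4).mul hf5
    -- u t agrees with this function near x
    have hequ : (fun y : EuclideanSpace ℝ (Fin n) =>
        η (Real.sqrt (‖y‖^2)) * y (⟨0, by omega⟩ : Fin n) * y (⟨1, by omega⟩ : Fin n)
          * (‖y‖^2) ^ t * φ (-Real.log (‖y‖^2))) =ᶠ[nhds x] u t := by
      have hopen : IsOpen {y : EuclideanSpace ℝ (Fin n) | y ≠ 0 ∧ ‖y‖ < 1} := by
        have : {y : EuclideanSpace ℝ (Fin n) | y ≠ 0 ∧ ‖y‖ < 1}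
            = {(0:EuclideanSpace ℝ (Fin n))}ᶜ ∩ Metric.ball 0 1 := by
          ext y; simp [Metric.mem_ball, dist_zero_right]
        rw [this]
        exact (isOpen_compl_singleton).inter Metric.isOpen_ball
      filter_upwards [hopen.mem_nhds ⟨hx0, by linarith⟩] with y hy
      rw [hu t y, if_neg (by push_neg; exact ⟨hy.1, by linarith [hy.2]⟩)]
      rw [Real.sqrt_sq (norm_nonneg y)]
      have hpow : (‖y‖^(2:ℕ)) ^ t = ‖y‖ ^ (2*t) := by
        rw [← Real.rpow_natCast ‖y‖ 2, ← Real.rpow_mul (norm_nonneg y)]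
        norm_num
      rw [hpow]
    have hfeq := hequ.fderiv_eq (𝕜 := ℝ)
    have happ := congrArg (fun L => L (EuclideanSpace.single j (1:ℝ))) (hV.fderiv)
    simp only [ContinuousLinearMap.add_apply, ContinuousLinearMap.coe_smul', Pi.smul_apply,
      ContinuousLinearMap.smul_apply, smul_eq_mul, innerSL_apply_apply, nsmul_eq_mul, Pi.mul_apply,
      EuclideanSpace.inner_single_right, RCLike.inner_apply, EuclideanSpace.single_apply,
      PiLp.proj_apply, starRingEnd_apply, star_trivial, Nat.cast_ofNat, mul_one] at happ
    rw [hsq] at happ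
    rw [← hfeq]; erw [happ]
    -- now a purely real-variable estimate
    have hcoord : ∀ i : Fin n, |x i| ≤ ‖x‖ := by
      intro i
      have h := abs_real_inner_le_norm (EuclideanSpace.single i (1:ℝ)) x
      simpa [EuclideanSpace.inner_single_left] using h
    have hec : |η ‖x‖| ≤ 1 := by
      have hm := hηrange ‖x‖ (norm_nonneg x)
      rw [abs_le]; constructor <;> [linarith [hm.1]; linarith [hm.2]]
    exact stmt8_bound_aux ‖x‖ (-Real.log (‖x‖^2)) t (η ‖x‖) (deriv η ‖x‖)
      (φ (-Real.log (‖x‖^2))) (deriv φ (-Real.log (‖x‖^2)))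
      (x (⟨0, by omega⟩ : Fin n)) (x (⟨1, by omega⟩ : Fin n)) (x j)
      (if (⟨0, by omega⟩ : Fin n) = j then 1 else 0)
      (if (⟨1, by omega⟩ : Fin n) = j then 1 else 0)
      Mη M' C1 hr0 (by linarith) ht ht2 hec
      (hMη ‖x‖ (norm_nonneg x) (by linarith))
      (hφbound _ hslog.le) (hM' _ hslog.le)
      (hcoord _) (hcoord _) (hcoord _)
      (by split_ifs <;> norm_num) (by split_ifs <;> norm_num)
      hslogpos.le hrs hC1nn hM'nn hMηnn
  · -- outer region: u t vanishes near x
    have hequ : u t =ᶠ[nhds x] (fun _ => (0:ℝ)) := by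
      have hopen : IsOpen {y : EuclideanSpace ℝ (Fin n) | 2/3 < ‖y‖} :=
        isOpen_lt continuous_const continuous_norm
      filter_upwards [hopen.mem_nhds (by simp only [Set.mem_setOf_eq]; linarith)] with y hy
      rw [hu t y]
      split_ifs with h
      · rfl
      · rw [hη0 ‖y‖ (by linarith [hy])]; ring
    rw [hequ.fderiv_eq, fderiv_const_apply]
    simpa using hB₂nn
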